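/- For carries in nested binary addition, the multiset {carry(i,Y,Z), carry(i,X,Y+Z)} equals the multiset {carry(i,X,Y), carry(i,X+Y,Z)} for every i; that is, (a_i ∧ b_i ↔ c_i ∧ d_i) and (a_i ∨ b_i ↔ c_i ∨ d_i), where a_i = carry(i,Y,Z), b_i = carry(i,X,Y+Z), c_i = carry(i,X,Y), d_i = carry(i,X+Y,Z). -/

import Mathlib

def carry (i : ℕ) (U V : Set ℕ) : Prop :=
  ∃ j < i, j ∈ U ∧ j ∈ V ∧ ∀ ℓ, j < ℓ → ℓ < i → Xor' (ℓ ∈ U) (ℓ ∈ V)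

def sadd (U V : Set ℕ) : Set ℕ :=
  {i | Xor' (Xor' (i ∈ U) (i ∈ V)) (carry i U V)}

/-!
The carry into position `i + 1` is the full-adder carry `carryOut` of the two bits at position `i`
and the carry into it. Whether one computes `X + (Y + Z)` or `(X + Y) + Z`, column `i` adds the
bits `x, y, z` and two incoming carries, and this total is the output bit plus twice the sum of the
two outgoing carries. So if the incoming carries have the same sum, so do the outgoing ones; for
two truth values, equal sums mean `{a, b} = {c, d}` as multisets, and induction on `i` finishes.
-/

def carryOut (p q r : Prop) : Prop := p ∧ q ∨ Xor p q ∧ r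

lemma not_carry_zero (U V : Set ℕ) : ¬ carry 0 U V := by
  rintro ⟨j, hj, -⟩
  omega

lemma carry_succ (i : ℕ) (U V : Set ℕ) :
    carry (i + 1) U V ↔ carryOut (i ∈ U) (i ∈ V) (carry i U V) := by
  constructor
  · rintro ⟨j, hj, hjU, hjV, hxor⟩
    rcases (Nat.lt_succ_iff.mp hj).eq_or_lt with rfl | hji
    · exact Or.inl ⟨hjU, hjV⟩
    · exact Or.inr ⟨hxor i hji i.lt_succ_self,
        j, hji, hjU, hjV, fun ℓ hjℓ hℓi => hxor ℓ hjℓ (by omega)⟩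
  · rintro (⟨hiU, hiV⟩ | ⟨hxi, j, hji, hjU, hjV, hxor⟩)
    · exact ⟨i, i.lt_succ_self, hiU, hiV, fun ℓ hiℓ hℓi => by omega⟩
    · refine ⟨j, by omega, hjU, hjV, fun ℓ hjℓ hℓi => ?_⟩
      rcases (Nat.lt_succ_iff.mp hℓi).eq_or_lt with rfl | hℓi'
      · exact hxi
      · exact hxor ℓ hjℓ hℓi'

lemma mem_sadd (i : ℕ) (U V : Set ℕ) :
    i ∈ sadd U V ↔ Xor (Xor (i ∈ U) (i ∈ V)) (carry i U V) := Iff.rfl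

lemma carryOut_pair_iff {x y z a b c d : Prop} (hand : a ∧ b ↔ c ∧ d) (hor : a ∨ b ↔ c ∨ d) :
    (carryOut y z a ∧ carryOut x (Xor (Xor y z) a) b ↔
        carryOut x y c ∧ carryOut (Xor (Xor x y) c) z d) ∧
      (carryOut y z a ∨ carryOut x (Xor (Xor y z) a) b ↔
        carryOut x y c ∨ carryOut (Xor (Xor x y) c) z d) := by
  unfold carryOut Xor
  by_cases x <;> by_cases y <;> by_cases z <;> by_cases a <;> by_cases b <;> by_cases c <;>
    by_cases d <;> simp_all

theorem carry_multiset_eq_general (X Y Z : Set ℕ)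
    (i : ℕ) :
    ((carry i Y Z ∧ carry i X (sadd Y Z)) ↔ (carry i X Y ∧ carry i (sadd X Y) Z)) ∧
    ((carry i Y Z ∨ carry i X (sadd Y Z)) ↔ (carry i X Y ∨ carry i (sadd X Y) Z)) := by
  induction i with
  | zero => simp only [not_carry_zero, and_self, or_self, iff_self]
  | succ i ih =>
    simp only [carry_succ, mem_sadd]
    exact carryOut_pair_iff ih.1 ih.2

theorem carry_multiset_eq (X Y Z : Set ℕ) (hX : X.Finite) (hY : Y.Finite) (hZ : Z.Finite)
    (i : ℕ) :
    ((carry i Y Z ∧ carry i X (sadd Y Z)) ↔ (carry i X Y ∧ carry i (sadd X Y) Z)) ∧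
    ((carry i Y Z ∨ carry i X (sadd Y Z)) ↔ (carry i X Y ∨ carry i (sadd X Y) Z)) :=
  carry_multiset_eq_general X Y Z i
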